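/- Under the hypotheses of the objective-collapse theorem, the regularisation term vanishes in the limit: γ·KL(q_γ ‖ π) → 0 as γ → 0, where q_γ minimises J_γ(q) = E_q[L] + γ·KL(q‖π). -/

import Mathlib

/-!
Comparing the minimiser `q_γ` with the prior conditioned on the sublevel set
`S_δ = {L ≤ L* + δ}` gives
`γ·KL(q_γ‖π) = J_γ(q_γ) - E_{q_γ}[L] ≤ J_γ(π(·|S_δ)) - L* ≤ δ + γ·log(1/π(S_δ))`,
because `π(·|S_δ)` has constant log-likelihood ratio `-log π(S_δ)` against `π`.
Since KL is nonnegative, letting `γ → 0` and then `δ → 0` gives the claim.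
-/

open MeasureTheory ProbabilityTheory Filter

/-- Kullback–Leibler divergence `KL(q‖π) = ∫ log (dq/dπ) dq` (for `q ≪ π`). -/
noncomputable def KL {Θ : Type*} [MeasurableSpace Θ] (q π : Measure Θ) : ℝ :=
  ∫ θ, llr q π θ ∂q

/-- The SoU / Gibbs objective `J_γ(q) = E_q[L] + γ·KL(q‖π)`. -/
noncomputable def Jobj {Θ : Type*} [MeasurableSpace Θ] (L : Θ → ℝ) (π : Measure Θ)
    (γ : ℝ) (q : Measure Θ) : ℝ :=
  ∫ θ, L θ ∂q + γ * KL q π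

open Topology

section

variable {Θ : Type*} [MeasurableSpace Θ]

/-- No integrability of `llr q π` is needed: without it both `KL q π` and `(klDiv q π).toReal`
take the junk value `0`. -/
lemma KL_nonneg {q π : Measure Θ} [IsFiniteMeasure q] [IsFiniteMeasure π] (hqπ : q ≪ π)
    (huniv : q Set.univ = π Set.univ) : 0 ≤ KL q π := by
  rw [KL, ← InformationTheory.toReal_klDiv_of_measure_eq hqπ huniv]
  exact ENNReal.toReal_nonneg

lemma llr_cond_self {μ : Measure Θ} [IsFiniteMeasure μ] {s : Set Θ} (hs : MeasurableSet s)
    (hμs : μ s ≠ 0) : llr μ[|s] μ =ᵐ[μ[|s]] fun _ ↦ -Real.log (μ.real s) := by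
  have hrn : μ[|s].rnDeriv μ =ᵐ[μ] (μ s)⁻¹ • s.indicator 1 := by
    filter_upwards [Measure.rnDeriv_smul_left_of_ne_top (μ.restrict s) μ (ENNReal.inv_ne_top.2 hμs),
      Measure.rnDeriv_restrict_self μ hs] with θ hsmul hrestrict
    rw [ProbabilityTheory.cond, hsmul, Pi.smul_apply, hrestrict, Pi.smul_apply]
  filter_upwards [cond_absolutelyContinuous.ae_le hrn, ae_cond_mem hs] with θ hθ hθs
  simp [llr, hθ, hθs, measureReal_def, Real.log_inv]

lemma KL_cond_self {μ : Measure Θ} [IsFiniteMeasure μ] {s : Set Θ} (hs : MeasurableSet s)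
    (hμs : μ s ≠ 0) : KL μ[|s] μ = -Real.log (μ.real s) := by
  have := cond_isProbabilityMeasure hμs
  rw [KL, integral_congr_ae (llr_cond_self hs hμs)]
  simp

lemma integral_le_of_ae_mem_of_mapsTo_Icc {ν : Measure Θ} [IsProbabilityMeasure ν] {s : Set Θ}
    (hs : ∀ᵐ θ ∂ν, θ ∈ s) {f : Θ → ℝ} (hf : AEStronglyMeasurable f ν) {a b : ℝ}
    (hab : Set.MapsTo f s (Set.Icc a b)) : ∫ θ, f θ ∂ν ≤ b := by
  have hfint : Integrable f ν := by
    refine .mono' (integrable_const (max |a| |b|)) hf ?_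
    filter_upwards [hs] with θ hθ
    exact abs_le_max_abs_abs (hab hθ).1 (hab hθ).2
  calc ∫ θ, f θ ∂ν ≤ ∫ _, b ∂ν := integral_mono_ae hfint (integrable_const b) <| by
        filter_upwards [hs] with θ hθ using (hab hθ).2
    _ = b := by simp

lemma mul_KL_le_of_Jobj_le {L : Θ → ℝ} {π q q' : Measure Θ} {γ c : ℝ}
    (hJ : Jobj L π γ q ≤ Jobj L π γ q') (hc : c ≤ ∫ θ, L θ ∂q) :
    γ * KL q π ≤ ∫ θ, L θ ∂q' - c + γ * KL q' π := by
  rw [Jobj, Jobj] at hJ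
  linarith

end

lemma tendsto_zero_of_le_add_mul {ι : Type*} {l : Filter ι} {a γ : ι → ℝ} (ha : ∀ i, 0 ≤ a i)
    (hγ : Tendsto γ l (𝓝 0)) (hbound : ∀ δ > 0, ∃ C, ∀ i, a i ≤ δ + γ i * C) :
    Tendsto a l (𝓝 0) := by
  refine tendsto_order.2 ⟨fun ε hε ↦ .of_forall fun i ↦ hε.trans_le (ha i), fun ε hε ↦ ?_⟩
  obtain ⟨C, hC⟩ := hbound (ε / 2) (half_pos hε)
  have hγC : Tendsto (fun i ↦ γ i * C) l (𝓝 0) := by simpa using hγ.mul_const C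
  filter_upwards [hγC.eventually (gt_mem_nhds (half_pos hε))] with i hi
  linarith [hC i]

theorem objective_collapse_kl_general {Θ : Type*} [MeasurableSpace Θ]
    (π : Measure Θ) [IsProbabilityMeasure π]
    (L : Θ → ℝ) (hL : Measurable L)
    (Lstar : ℝ) (hglb : IsGLB (Set.range L) Lstar)
    (hπ : ∀ δ : ℝ, 0 < δ → 0 < π {θ | L θ ≤ Lstar + δ})
    (γ : ℕ → ℝ) (hγpos : ∀ m, 0 < γ m) (hγ0 : Tendsto γ atTop (nhds 0))
    (q : ℕ → Measure Θ) (hqprob : ∀ m, IsProbabilityMeasure (q m))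
    (hqac : ∀ m, q m ≪ π)
    (hqint : ∀ m, Integrable L (q m))
    (hmin : ∀ m, ∀ q' : Measure Θ, IsProbabilityMeasure q' → q' ≪ π →
      Jobj L π (γ m) (q m) ≤ Jobj L π (γ m) q') :
    Tendsto (fun m => γ m * KL (q m) π) atTop (nhds 0) := by
  have hLstar : ∀ θ, Lstar ≤ L θ := fun θ ↦ hglb.1 (Set.mem_range_self θ)
  refine tendsto_zero_of_le_add_mul (fun m ↦ mul_nonneg (hγpos m).le
    (KL_nonneg (hqac m) (by simp))) hγ0 fun δ hδ ↦ ?_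
  set S := {θ | L θ ≤ Lstar + δ}
  have hS : MeasurableSet S := hL measurableSet_Iic
  have hπS : π S ≠ 0 := (hπ δ hδ).ne'
  have := cond_isProbabilityMeasure (μ := π) hπS
  have hLcond : ∫ θ, L θ ∂π[|S] ≤ Lstar + δ :=
    integral_le_of_ae_mem_of_mapsTo_Icc (ae_cond_mem hS) hL.aestronglyMeasurable
      fun θ hθ ↦ ⟨hLstar θ, hθ⟩
  refine ⟨-Real.log (π.real S), fun m ↦ ?_⟩
  have hLq : Lstar ≤ ∫ θ, L θ ∂q m := by
    simpa using integral_mono (integrable_const Lstar) (hqint m) hLstar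
  have hKL := mul_KL_le_of_Jobj_le (hmin m π[|S] inferInstance cond_absolutelyContinuous) hLq
  rw [KL_cond_self hS hπS] at hKL
  linarith

/-- Objective collapse, part 4: the weighted regularisation term vanishes,
`γ·KL(q_γ‖π) → 0` as `γ → 0`. -/
theorem objective_collapse_kl {Θ : Type*} [MeasurableSpace Θ]
    (π : Measure Θ) [IsProbabilityMeasure π]
    (L : Θ → ℝ) (hL : Measurable L)
    (Lstar : ℝ) (hglb : IsGLB (Set.range L) Lstar)
    (hπ : ∀ δ : ℝ, 0 < δ → 0 < π {θ | L θ ≤ Lstar + δ})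
    (γ : ℕ → ℝ) (hγpos : ∀ m, 0 < γ m) (hγ0 : Tendsto γ atTop (nhds 0))
    (q : ℕ → Measure Θ) (hqprob : ∀ m, IsProbabilityMeasure (q m))
    (hqac : ∀ m, q m ≪ π)
    (hqint : ∀ m, Integrable L (q m)) (hqllr : ∀ m, Integrable (llr (q m) π) (q m))
    (hmin : ∀ m, ∀ q' : Measure Θ, IsProbabilityMeasure q' → q' ≪ π →
      Jobj L π (γ m) (q m) ≤ Jobj L π (γ m) q') :
    Tendsto (fun m => γ m * KL (q m) π) atTop (nhds 0) :=
  objective_collapse_kl_general π L hL Lstar hglb hπ γ hγpos hγ0 q hqprob hqac hqint hmin
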